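/- Let 𝔤 be a complex simple Lie algebra, E ∈ 𝔥 the grading element associated to the adjoint variety (so α̃(E) = 2 for the highest root α̃ and the grading is 𝔤 = 𝔤^{−2}⊕…⊕𝔤^2), and let U = U^1 ⊕ U^0 ⊕ U^{−1} be a 𝔤-representation whose E-eigenvalues are exactly 1, 0, −1. Fix a highest root vector v ∈ 𝔤^{α̃} = 𝔤^2 and let ξ ∈ 𝔤^{−1}. If ξ²(u) = 0 for all u ∈ U^1 and the representation of 𝔤^0 on U^1 is faithful, then (ad ξ)²(v) = 0. -/
import Mathlib


open LieAlgebra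

/-- Let `𝔤` be a complex simple Lie algebra with the adjoint (contact)
grading element `E`, and let `U = U^1 ⊕ U^0 ⊕ U^{−1}` be a `𝔤`-representation whose
`E`-eigenvalues are exactly `1, 0, −1`.  Let `v` be a highest root vector (so `[E,v] = 2v`,
i.e. `v ∈ 𝔤^2`) and let `ξ ∈ 𝔤^{−1}` (so `[E,ξ] = −ξ`).  If `ξ²(u) = 0` for all `u ∈ U^1` and
the representation of `𝔤^0 = {x : [E,x] = 0}` on `U^1` is faithful, then `(ad ξ)²(v) = 0`. -/
theorem stmt15 {L U : Type*} [LieRing L] [LieAlgebra ℂ L] [FiniteDimensional ℂ L]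
    [LieAlgebra.IsSimple ℂ L]
    [AddCommGroup U] [Module ℂ U] [LieRingModule L U] [LieModule ℂ L U]
    (E v ξ : L)
    (hv : ⁅E, v⁆ = (2 : ℂ) • v)
    (hξ : ⁅E, ξ⁆ = -ξ)
    (hUtop : (⨆ q ∈ ({-1, 0, 1} : Finset ℤ),
        Module.End.eigenspace (LieModule.toEnd ℂ L U E) (q : ℂ)) = ⊤)
    (hUonly : ∀ q : ℤ, q ∉ ({-1, 0, 1} : Finset ℤ) →
        Module.End.eigenspace (LieModule.toEnd ℂ L U E) (q : ℂ) = ⊥)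
    (hξ2 : ∀ u ∈ Module.End.eigenspace (LieModule.toEnd ℂ L U E) (1 : ℂ),
        ⁅ξ, ⁅ξ, u⁆⁆ = (0 : U))
    (hfaith : ∀ x : L, ⁅E, x⁆ = 0 →
        (∀ u ∈ Module.End.eigenspace (LieModule.toEnd ℂ L U E) (1 : ℂ), ⁅x, u⁆ = (0 : U)) →
        x = 0) :
    ⁅ξ, ⁅ξ, v⁆⁆ = 0 := by
  -- shift lemma: an element of weight c maps the μ-eigenspace into the (μ+c)-eigenspace
  have shift : ∀ (x : L) (c : ℂ), ⁅E, x⁆ = c • x → ∀ (μ : ℂ) (u : U),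
      u ∈ Module.End.eigenspace (LieModule.toEnd ℂ L U E) μ →
      ⁅x, u⁆ ∈ Module.End.eigenspace (LieModule.toEnd ℂ L U E) (μ + c) := by
    intro x c hx μ u hu
    rw [Module.End.mem_eigenspace_iff] at hu ⊢
    simp only [LieModule.toEnd_apply_apply] at hu ⊢
    rw [leibniz_lie, hx, hu, smul_lie, lie_smul, add_smul, add_comm]
  have hξ' : ⁅E, ξ⁆ = (-1 : ℂ) • ξ := by rw [hξ, neg_one_smul]
  -- eigenspaces 2 and 3 are trivial
  have h2 : Module.End.eigenspace (LieModule.toEnd ℂ L U E) (2 : ℂ) = ⊥ := by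
    have := hUonly 2 (by decide)
    simpa using this
  have h3 : Module.End.eigenspace (LieModule.toEnd ℂ L U E) (3 : ℂ) = ⊥ := by
    have := hUonly 3 (by decide)
    simpa using this
  -- the bracket [ξ,[ξ,v]] has weight 0 in L
  have hw : ⁅E, ⁅ξ, ⁅ξ, v⁆⁆⁆ = 0 := by
    have h1 : ⁅E, ⁅ξ, v⁆⁆ = ⁅ξ, v⁆ := by
      rw [leibniz_lie, hξ, hv, lie_smul, neg_lie]
      module
    rw [leibniz_lie, hξ, h1, neg_lie]
    abel
  -- [ξ,[ξ,v]] kills U^1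
  apply hfaith _ hw
  intro u hu
  have hvu : ⁅v, u⁆ = 0 := by
    have := shift v 2 hv 1 u hu
    rw [show (1 : ℂ) + 2 = 3 by norm_num, h3, Submodule.mem_bot] at this
    exact this
  have hξu : ⁅ξ, u⁆ ∈ Module.End.eigenspace (LieModule.toEnd ℂ L U E) (0 : ℂ) := by
    have := shift ξ (-1) hξ' 1 u hu
    simpa using this
  have hvξu : ⁅v, ⁅ξ, u⁆⁆ = 0 := by
    have := shift v 2 hv 0 ⁅ξ, u⁆ hξu
    rw [show (0 : ℂ) + 2 = 2 by norm_num, h2, Submodule.mem_bot] at this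
    exact this
  rw [lie_lie, lie_lie, lie_lie, hvu, hvξu, hξ2 u hu]
  simp
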